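/- For the weighted measure μ_γ with γ > -n, for every x ∈ ℝ^n and every r > |x|, there exist constants c, C > 0 depending only on n and γ such that c·(r - |x|)^{n+γ} ≤ μ_γ(B_r(x)) ≤ C·(r + |x|)^{n+γ}. -/

import Mathlib

/-!
The weight `‖z‖ ^ γ` is homogeneous of degree `γ` and Haar measure on a `d`-dimensional space
of degree `d`, so `μ_γ(B_ρ(0)) = ρ ^ (d + γ) μ_γ(B_1(0))`. The constant `μ_γ(B_1(0))` is positive,
and finite because `‖z‖ ^ γ` is integrable near the origin when `γ > -d`. The bounds then follow
from `B_{r - ‖x‖}(0) ⊆ B_r(x) ⊆ B_{r + ‖x‖}(0)`.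
-/

open MeasureTheory Metric Set Pointwise

section PowerWeighted

variable {E : Type*} [NormedAddCommGroup E] [NormedSpace ℝ E] [FiniteDimensional ℝ E]
  [MeasurableSpace E] [BorelSpace E] (μ : Measure E) [μ.IsAddHaarMeasure]

noncomputable def powerWeightedMeasure (γ : ℝ) : Measure E :=
  μ.withDensity fun z => ENNReal.ofReal (‖z‖ ^ γ)


theorem powerWeightedMeasure_smul_set (γ : ℝ) {ρ : ℝ} (hρ : 0 < ρ) {s : Set E}
    (hs : MeasurableSet s) :
    powerWeightedMeasure μ γ (ρ • s) =
      ENNReal.ofReal (ρ ^ ((Module.finrank ℝ E : ℝ) + γ)) * powerWeightedMeasure μ γ s := by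
  have hμ : μ = ENNReal.ofReal (ρ ^ Module.finrank ℝ E) • μ.map (ρ • ·) := by
    rw [Measure.map_addHaar_smul μ hρ.ne', smul_smul, ← ENNReal.ofReal_mul (by positivity),
      abs_of_pos (by positivity), mul_inv_cancel₀ (by positivity), ENNReal.ofReal_one, one_smul]
  have hg : Measurable fun z : E => ENNReal.ofReal (‖z‖ ^ γ) := by fun_prop
  rw [powerWeightedMeasure, withDensity_apply _ (hs.const_smul₀ ρ), withDensity_apply _ hs]
  calc ∫⁻ z in ρ • s, ENNReal.ofReal (‖z‖ ^ γ) ∂μ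
      = ENNReal.ofReal (ρ ^ Module.finrank ℝ E) *
          ∫⁻ z in ρ • s, ENNReal.ofReal (‖z‖ ^ γ) ∂μ.map (ρ • ·) := by
        conv_lhs => rw [hμ]
        rw [Measure.restrict_smul, lintegral_smul_measure, smul_eq_mul]
    _ = ENNReal.ofReal (ρ ^ Module.finrank ℝ E) *
          ∫⁻ y in s, ENNReal.ofReal (ρ ^ γ) * ENNReal.ofReal (‖y‖ ^ γ) ∂μ := by
        rw [setLIntegral_map (hs.const_smul₀ ρ) hg (measurable_const_smul ρ),
          preimage_smul₀ hρ.ne', inv_smul_smul₀ hρ.ne']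
        refine congrArg _ (setLIntegral_congr_fun hs fun y _ => ?_)
        rw [norm_smul, Real.norm_of_nonneg hρ.le, Real.mul_rpow hρ.le (norm_nonneg y),
          ENNReal.ofReal_mul (by positivity)]
    _ = _ := by
        rw [lintegral_const_mul _ hg, ← mul_assoc, ← ENNReal.ofReal_mul (by positivity),
          Real.rpow_add hρ, Real.rpow_natCast]

theorem powerWeightedMeasure_ball_zero (γ : ℝ) {ρ : ℝ} (hρ : 0 < ρ) :
    powerWeightedMeasure μ γ (ball 0 ρ) =
      ENNReal.ofReal (ρ ^ ((Module.finrank ℝ E : ℝ) + γ)) *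
        powerWeightedMeasure μ γ (ball 0 1) := by
  rw [← powerWeightedMeasure_smul_set μ γ hρ measurableSet_ball, smul_unitBall_of_pos hρ]

theorem powerWeightedMeasure_unitBall_pos [Nontrivial E] (γ : ℝ) :
    0 < powerWeightedMeasure μ γ (ball 0 1) := by
  refine pos_iff_ne_zero.2 fun h => (measure_ball_pos μ (0 : E) one_pos).ne' ?_
  rw [powerWeightedMeasure, withDensity_apply_eq_zero' (by fun_prop)] at h
  refine measure_mono_null (fun z hz => ?_) (measure_union_null h (measure_singleton (0 : E)))
  rcases eq_or_ne z 0 with rfl | hz0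
  · exact Or.inr rfl
  · exact Or.inl ⟨(ENNReal.ofReal_pos.2 (Real.rpow_pos_of_pos (norm_pos_iff.2 hz0) γ)).ne', hz⟩

theorem powerWeightedMeasure_unitBall_lt_top [Nontrivial E] {γ : ℝ}
    (hγ : -(Module.finrank ℝ E : ℝ) < γ) :
    powerWeightedMeasure μ γ (ball 0 1) < ⊤ := by
  rw [powerWeightedMeasure, withDensity_apply _ measurableSet_ball]
  refine IntegrableOn.setLIntegral_lt_top (integrableOn_ball_of_norm_le_rpow (C := 1) (α := -γ)
    Module.finrank_pos (by linarith) (ae_of_all _ fun z => ?_) (by fun_prop : Measurable _).aestronglyMeasurable)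
  rw [neg_neg, one_mul, Real.norm_of_nonneg (by positivity)]

theorem powerWeightedMeasure_ball_le (γ : ℝ) (x : E) (r : ℝ) :
    powerWeightedMeasure μ γ (ball x r) ≤
      ENNReal.ofReal ((r + ‖x‖) ^ ((Module.finrank ℝ E : ℝ) + γ)) *
        powerWeightedMeasure μ γ (ball 0 1) := by
  rcases le_or_gt r 0 with hr | hr
  · simp [ball_eq_empty.2 hr]
  rw [← powerWeightedMeasure_ball_zero μ γ (by positivity)]
  refine measure_mono (ball_subset_ball' ?_)
  rw [dist_comm, dist_zero_left]

theorem le_powerWeightedMeasure_ball (γ : ℝ) {x : E} {r : ℝ} (hxr : ‖x‖ < r) :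
    ENNReal.ofReal ((r - ‖x‖) ^ ((Module.finrank ℝ E : ℝ) + γ)) *
        powerWeightedMeasure μ γ (ball 0 1) ≤
      powerWeightedMeasure μ γ (ball x r) := by
  rw [← powerWeightedMeasure_ball_zero μ γ (sub_pos.2 hxr)]
  refine measure_mono (ball_subset_ball' ?_)
  rw [dist_zero_left, sub_add_cancel]

end PowerWeighted

/-- Two-sided bound for the weighted measure of a ball `B_r(x)` with `r > |x|`:
`c (r-|x|)^{n+γ} ≤ μ_γ(B_r(x)) ≤ C (r+|x|)^{n+γ}` with `c, C` depending only on `n, γ`. -/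
theorem stmt_1 (n : ℕ) (hn : 2 ≤ n) (γ : ℝ) (hγ : -(n : ℝ) < γ) :
    ∃ c > (0 : ℝ), ∃ C > (0 : ℝ), ∀ (x : EuclideanSpace ℝ (Fin n)) (r : ℝ), ‖x‖ < r →
      ENNReal.ofReal (c * (r - ‖x‖) ^ ((n : ℝ) + γ)) ≤
          (volume.withDensity fun z : EuclideanSpace ℝ (Fin n) =>
            ENNReal.ofReal (‖z‖ ^ γ)) (ball x r) ∧
        (volume.withDensity fun z : EuclideanSpace ℝ (Fin n) =>
            ENNReal.ofReal (‖z‖ ^ γ)) (ball x r) ≤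
          ENNReal.ofReal (C * (r + ‖x‖) ^ ((n : ℝ) + γ)) := by
  have : NeZero n := ⟨by omega⟩
  have hd : Module.finrank ℝ (EuclideanSpace ℝ (Fin n)) = n := finrank_euclideanSpace_fin
  set K := powerWeightedMeasure (volume : Measure (EuclideanSpace ℝ (Fin n))) γ (ball 0 1)
  have hK_lt_top : K < ⊤ := powerWeightedMeasure_unitBall_lt_top _ (by rwa [hd])
  have hK_pos : 0 < K.toReal := ENNReal.toReal_pos (powerWeightedMeasure_unitBall_pos _ γ).ne'
    hK_lt_top.ne
  have hK_mul (ρ : ℝ) : ENNReal.ofReal (K.toReal * ρ ^ ((n : ℝ) + γ)) =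
      ENNReal.ofReal (ρ ^ ((n : ℝ) + γ)) * K := by
    rw [mul_comm, ENNReal.ofReal_mul' hK_pos.le, ENNReal.ofReal_toReal hK_lt_top.ne]
  refine ⟨K.toReal, hK_pos, K.toReal, hK_pos, fun x r hxr => ?_⟩
  have h_lower := le_powerWeightedMeasure_ball volume γ hxr
  have h_upper := powerWeightedMeasure_ball_le volume γ x r
  rw [hd] at h_lower h_upper
  rw [hK_mul, hK_mul]
  exact ⟨h_lower, h_upper⟩
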